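/- arXiv:0904.0039 — 6 statements merged into one kernel-verified Lean document; each statement's English description precedes it below -/
import Mathlib

section
/- A stable curve of compact type has at most one central component, i.e. at most one irreducible component X such that every connected component Z of the closure of the complement of X satisfies g_Z < g_C/2. -/
open Finset

/-- An abstract (combinatorial) model of a nodal curve: a finite set of irreducible
components `V` (with geometric genus `w v`), and a finite set of nodes `N`, each node
lying on the (unordered pair of) components recorded by `ends`. -/
structure NodalCurve where
  V : Type
  N : Type
  [instFV : Fintype V]
  [instDV : DecidableEq V]
  [instFN : Fintype N]
  [instDN : DecidableEq N]
  ends : N → Sym2 V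
  w : V → ℕ

namespace NodalCurve

variable (C : NodalCurve)

instance : Fintype C.V := C.instFV
instance : DecidableEq C.V := C.instDV
instance : Fintype C.N := C.instFN
instance : DecidableEq C.N := C.instDN

/-- The dual graph of the curve (as a simple graph on the components). -/
def graph : SimpleGraph C.V :=
  SimpleGraph.fromRel (fun u v => ∃ n, C.ends n = s(u, v))

/-- The number of branches (ends) of the node `n` lying on the subcurve `S`. -/
def endsIn (S : Finset C.V) (n : C.N) : ℕ :=
  Sym2.lift ⟨fun a b => (if a ∈ S then 1 else 0) + (if b ∈ S then 1 else 0),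
    fun _ _ => add_comm _ _⟩ (C.ends n)

/-- `k S = #(Y ∩ Y')`: the number of nodes where the subcurve `S` meets its complement. -/
def k (S : Finset C.V) : ℕ := (univ.filter fun n => C.endsIn S n = 1).card

/-- nodes both of whose branches lie on `S`. -/
def internalNodes (S : Finset C.V) : ℕ := (univ.filter fun n => C.endsIn S n = 2).card

/-- The (arithmetic) genus of the curve. -/
def genus : ℤ :=
  ∑ v, (C.w v : ℤ) + (Fintype.card C.N : ℤ) - (Fintype.card C.V : ℤ) + 1

/-- The genus `1 - χ(O_Y)` of a (connected) subcurve with components `S`. -/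
def genusSub (S : Finset C.V) : ℤ :=
  ∑ v ∈ S, (C.w v : ℤ) + (C.internalNodes S : ℤ) - (S.card : ℤ) + 1

/-- `χ(O_Y)` for the subcurve `Y` with components `S`. -/
def chiO (S : Finset C.V) : ℤ :=
  (S.card : ℤ) - ∑ v ∈ S, (C.w v : ℤ) - (C.internalNodes S : ℤ)

/-- The degree of `ω_C` restricted to the subcurve with components `S`. -/
def degω (S : Finset C.V) : ℤ :=
  ∑ v ∈ S, (2 * (C.w v : ℤ) - 2) + ∑ n, (C.endsIn S n : ℤ)

/-- Connectedness of the subcurve with components `S`. -/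
def connectedSub (S : Finset C.V) : Prop := (C.graph.induce (S : Set C.V)).Connected

/-- Connectedness of the curve. -/
def Conn : Prop := C.graph.Connected

/-- The curve is of compact type: every node is separating, i.e. the dual graph
(with its multiple edges and loops) is a tree. -/
def CompactType : Prop :=
  Function.Injective C.ends ∧ (∀ n, ¬ (C.ends n).IsDiag) ∧ C.graph.IsTree

/-- Deligne–Mumford stability. -/
def Stable : Prop := ∀ v, 0 < 2 * (C.w v : ℤ) - 2 + ∑ n, (C.endsIn {v} n : ℤ)

/-- A tail: a subcurve meeting its complement in exactly one node. -/
def isTail (S : Finset C.V) : Prop := C.k S = 1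

/-- The degree `d_Y` of a multidegree `e` on the subcurve with components `S`. -/
def degSub (e : C.V → ℤ) (S : Finset C.V) : ℤ := ∑ v ∈ S, e v

/-- The total degree of a multidegree. -/
def totalDeg (e : C.V → ℤ) : ℤ := ∑ v, e v

/-- Semistability (w.r.t. the canonical polarization) at the subcurve `S`:
`|d_Y - d·deg(ω_C|_Y)/(2g-2)| ≤ k_Y/2`. -/
def semistableAt (e : C.V → ℤ) (S : Finset C.V) : Prop :=
  |(C.degSub e S : ℚ) - (C.totalDeg e : ℚ) * (C.degω S : ℚ) / (2 * (C.genus : ℚ) - 2)|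
    ≤ (C.k S : ℚ) / 2

/-- The strict lower inequality of quasistability at the subcurve `S`:
`d_Y - d·deg(ω_C|_Y)/(2g-2) > -k_Y/2`. -/
def quasistableLowAt (e : C.V → ℤ) (S : Finset C.V) : Prop :=
  -((C.k S : ℚ) / 2) <
    (C.degSub e S : ℚ) - (C.totalDeg e : ℚ) * (C.degω S : ℚ) / (2 * (C.genus : ℚ) - 2)

/-- A semistable multidegree. -/
def semistable (e : C.V → ℤ) : Prop :=
  ∀ S : Finset C.V, S.Nonempty → S ≠ univ → C.semistableAt e S

/-- An `X`-quasistable multidegree. -/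
def Xquasistable (X : C.V) (e : C.V → ℤ) : Prop :=
  C.semistable e ∧
    ∀ S : Finset C.V, S.Nonempty → S ≠ univ → X ∈ S → C.quasistableLowAt e S

/-- A `d̄`-big tail: `d_Z·deg(ω_C) - d·deg(ω_C|_Z) < 2g_Z - g`. -/
def isBigTail (e : C.V → ℤ) (S : Finset C.V) : Prop :=
  C.isTail S ∧
    C.degSub e S * (2 * C.genus - 2) - C.totalDeg e * C.degω S
      < 2 * C.genusSub S - C.genus

/-- `S` is (the set of components of) a connected component of the complement `X'`
of the irreducible component `x`. -/
def complComponent (x : C.V) (S : Finset C.V) : Prop :=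
  x ∉ S ∧ S.Nonempty ∧ C.connectedSub S ∧
    ∀ u ∈ S, ∀ v : C.V, C.graph.Adj u v → v ≠ x → v ∈ S

/-- `T` is (the set of components of) a connected component of the subcurve `S`. -/
def subComponent (S T : Finset C.V) : Prop :=
  T ⊆ S ∧ T.Nonempty ∧ C.connectedSub T ∧
    ∀ u ∈ T, ∀ v ∈ S, C.graph.Adj u v → v ∈ T

/-- A central component: every connected component `Z` of `X'` has `g_Z < g/2`. -/
def central (x : C.V) : Prop :=
  ∀ S : Finset C.V, C.complComponent x S → 2 * C.genusSub S < C.genus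

/-- A semicentral component: every connected component `Z` of `X'` has `g_Z ≤ g/2`. -/
def semicentral (x : C.V) : Prop :=
  ∀ S : Finset C.V, C.complComponent x S → 2 * C.genusSub S ≤ C.genus

end NodalCurve

/-!
If `x ≠ y` were both central, let `Z_y` be the connected component of `X'` containing `y` and
`Z_x` the connected component of `Y'` containing `x`. Every component `v` lies in one of them:
a path from `y` to `v` either avoids `x`, or its part after `x` avoids `y`. On a curve of compact
type the genus of the curve is the sum of the genera of its components, while that of a connected
subcurve is at least the sum over its components, so `g ≤ g_{Z_x} + g_{Z_y} < g/2 + g/2`.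
-/

theorem Finset.sum_union_le_of_nonneg {ι M : Type*} [DecidableEq ι] [AddCommMonoid M]
    [PartialOrder M] [IsOrderedAddMonoid M] {f : ι → M} (hf : ∀ i, 0 ≤ f i)
    (s t : Finset ι) :
    ∑ i ∈ s ∪ t, f i ≤ ∑ i ∈ s, f i + ∑ i ∈ t, f i := by
  rw [← sum_union_inter]
  exact le_add_of_nonneg_right (sum_nonneg fun i _ => hf i)

namespace SimpleGraph

variable {V : Type*} {G : SimpleGraph V}

theorem Connected.exists_walk_avoiding_or (hG : G.Connected) {x y : V} (hxy : x ≠ y) (v : V) :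
    (∃ p : G.Walk y v, x ∉ p.support) ∨ ∃ p : G.Walk x v, y ∉ p.support := by
  classical
  obtain ⟨q, hq⟩ := (hG.preconnected v y).exists_isPath
  by_cases hx : x ∈ q.support
  · exact .inr ⟨(q.takeUntil x hx).reverse,
      by simpa using Walk.endpoint_notMem_support_takeUntil hq hx hxy.symm⟩
  · exact .inl ⟨q.reverse, by simpa using hx⟩

end SimpleGraph

namespace NodalCurve

variable (C : NodalCurve)

lemma exists_node_of_adj {u v : C.V} (h : C.graph.Adj u v) : ∃ n, C.ends n = s(u, v) := by
  rw [graph, SimpleGraph.fromRel_adj] at h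
  rcases h.2 with ⟨n, hn⟩ | ⟨n, hn⟩
  · exact ⟨n, hn⟩
  · exact ⟨n, hn.trans Sym2.eq_swap⟩

lemma endsIn_eq {S : Finset C.V} {n : C.N} {a b : C.V} (h : C.ends n = s(a, b)) :
    C.endsIn S n = (if a ∈ S then 1 else 0) + (if b ∈ S then 1 else 0) := by
  rw [endsIn, h, Sym2.lift_mk]

variable {C}

lemma CompactType.ends_mem_edgeSet (hct : C.CompactType) (n : C.N) :
    C.ends n ∈ C.graph.edgeSet := by
  obtain ⟨a, b, hab⟩ : ∃ a b, C.ends n = s(a, b) :=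
    Sym2.ind (f := fun e => ∃ a b, e = s(a, b)) (fun a b => ⟨a, b, rfl⟩) _
  have hne : a ≠ b := by simpa [hab] using hct.2.1 n
  rw [hab, SimpleGraph.mem_edgeSet, graph, SimpleGraph.fromRel_adj]
  exact ⟨hne, .inl ⟨n, hab⟩⟩

theorem CompactType.card_nodes_add_one (hct : C.CompactType) :
    Fintype.card C.N + 1 = Fintype.card C.V := by
  classical
  let f : C.N → C.graph.edgeSet := fun n => ⟨C.ends n, hct.ends_mem_edgeSet n⟩
  have hf : f.Bijective := by
    refine ⟨fun m n h => hct.1 (congrArg Subtype.val h), ?_⟩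
    rintro ⟨e, he⟩
    induction e using Sym2.ind with
    | _ a b =>
      obtain ⟨n, hn⟩ := C.exists_node_of_adj he
      exact ⟨n, Subtype.ext hn⟩
  rw [Fintype.card_of_bijective hf, ← hct.2.2.card_edgeFinset, SimpleGraph.edgeFinset,
    Set.toFinset_card]

theorem CompactType.genus_eq_sum_w (hct : C.CompactType) : C.genus = ∑ v, (C.w v : ℤ) := by
  have := hct.card_nodes_add_one
  rw [genus]
  omega

lemma CompactType.card_le_internalNodes_add_one (hct : C.CompactType) {S : Finset C.V}
    (hS : C.connectedSub S) : #S ≤ C.internalNodes S + 1 := by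
  classical
  set H := C.graph.induce (S : Set C.V)
  have hedges : #H.edgeFinset + 1 = #S := by
    simpa using (⟨hS, hct.2.2.isAcyclic.induce _⟩ : H.IsTree).card_edgeFinset
  set internal : Finset C.N := {n | C.endsIn S n = 2}
  have hmaps : Set.MapsTo (Sym2.map Subtype.val) (↑H.edgeFinset : Set (Sym2 (S : Set C.V)))
      (↑(internal.image C.ends) : Set (Sym2 C.V)) := by
    intro e he
    induction e using Sym2.ind with
    | _ a b =>
      obtain ⟨n, hn⟩ := C.exists_node_of_adj (by simpa [H] using he)
      simp only [internal, mem_coe, mem_image, mem_filter, mem_univ, true_and, Sym2.map_mk]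
      exact ⟨n, by simp [C.endsIn_eq hn], hn⟩
  have := card_le_card_of_injOn _ hmaps (Sym2.map.injective Subtype.val_injective).injOn
  have := card_image_le (s := internal) (f := C.ends)
  change #S ≤ #internal + 1
  omega

theorem CompactType.sum_w_le_genusSub (hct : C.CompactType) {S : Finset C.V}
    (hS : C.connectedSub S) :
    ∑ v ∈ S, (C.w v : ℤ) ≤ C.genusSub S := by
  have := hct.card_le_internalNodes_add_one hS
  rw [genusSub]
  omega

variable (C) in
open Classical in
/-- The connected component of `X'` containing `y`, where `X` is the component `x`. -/
noncomputable def complComponentOf (x y : C.V) : Finset C.V :=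
  {v | ∃ p : C.graph.Walk y v, x ∉ p.support}

lemma mem_complComponentOf {x y v : C.V} :
    v ∈ C.complComponentOf x y ↔ ∃ p : C.graph.Walk y v, x ∉ p.support := by
  simp [complComponentOf]

theorem complComponent_complComponentOf {x y : C.V} (hyx : y ≠ x) :
    C.complComponent x (C.complComponentOf x y) := by
  have hy : y ∈ C.complComponentOf x y :=
    mem_complComponentOf.2 ⟨.nil, by simpa using hyx.symm⟩
  refine ⟨fun hx => ?_, ⟨y, hy⟩, ?_, ?_⟩
  · obtain ⟨p, hp⟩ := mem_complComponentOf.1 hx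
    exact hp p.end_mem_support
  · refine SimpleGraph.induce_connected_of_patches y hy fun {v} hv => ?_
    obtain ⟨p, hp⟩ := mem_complComponentOf.1 hv
    have hsupp : ∀ w ∈ p.support, w ∈ (C.complComponentOf x y : Set C.V) := fun w hw =>
      mem_complComponentOf.2
        ⟨p.takeUntil w hw, fun hx => hp (p.support_takeUntil_subset_support hw hx)⟩
    exact ⟨_, subset_rfl, hy, hv, ⟨p.induce _ hsupp⟩⟩
  · intro u hu v hadj hvx
    obtain ⟨p, hp⟩ := mem_complComponentOf.1 hu
    exact mem_complComponentOf.2 ⟨p.concat hadj, by simpa [hp] using hvx.symm⟩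

theorem complComponentOf_union_eq_univ (hconn : C.Conn) {x y : C.V} (hxy : x ≠ y) :
    C.complComponentOf y x ∪ C.complComponentOf x y = univ :=
  eq_univ_of_forall fun v => by
    rcases SimpleGraph.Connected.exists_walk_avoiding_or hconn hxy v with h | h
    · exact mem_union_right _ (mem_complComponentOf.2 h)
    · exact mem_union_left _ (mem_complComponentOf.2 h)

end NodalCurve

theorem at_most_one_central_component_general (C : NodalCurve) (hct : C.CompactType) :
    ∀ x y : C.V, C.central x → C.central y → x = y := by
  intro x y hx hy
  by_contra hxy
  set Zx := C.complComponentOf y x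
  set Zy := C.complComponentOf x y
  have hZx : C.complComponent y Zx := NodalCurve.complComponent_complComponentOf hxy
  have hZy : C.complComponent x Zy := NodalCurve.complComponent_complComponentOf (Ne.symm hxy)
  have hgenus : C.genus ≤ C.genusSub Zx + C.genusSub Zy :=
    calc C.genus = ∑ v, (C.w v : ℤ) := hct.genus_eq_sum_w
      _ ≤ ∑ v ∈ Zx, (C.w v : ℤ) + ∑ v ∈ Zy, (C.w v : ℤ) := by
        rw [← NodalCurve.complComponentOf_union_eq_univ hct.2.2.connected hxy]
        exact sum_union_le_of_nonneg (fun v => Int.natCast_nonneg _) _ _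
      _ ≤ C.genusSub Zx + C.genusSub Zy :=
        add_le_add (hct.sum_w_le_genusSub hZx.2.2.1) (hct.sum_w_le_genusSub hZy.2.2.1)
  have := hy Zx hZx
  have := hx Zy hZy
  omega

/-- A stable curve of compact type has at most one central component. -/
theorem at_most_one_central_component (C : NodalCurve) (hconn : C.Conn)
    (hct : C.CompactType) (hst : C.Stable) :
    ∀ x y : C.V, C.central x → C.central y → x = y :=
  at_most_one_central_component_general C hct
end

section
/- Let C be a stable curve of compact type of genus g ≥ 2. Then C has exactly one central component if and only if there is no separating node of C whose two attached tails both have genus g/2. -/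
open Finset

/-!
In compact type the dual graph is a tree, so a connected subcurve spans one node fewer than it
has components and its genus is the sum of the geometric genera of its components; in particular
the genera of the two tails at a node add up to `g`. The connected components of `X'` are the
branches of the tree at `X`, each of them a tail.

Two central components `X ≠ Y` cannot exist: the branch at `X` containing `Y` and its complement,
which lies in a branch at `Y`, would both have genus `< g/2`. A central `X` also excludes a node
with two tails of genus `g/2`, as the tail avoiding `X` lies in a branch at `X`. Conversely, if no
component is central and there is no such node, every `X` has a branch of genus `> g/2`. The edges
joining each `X` to its heavy branch are pairwise distinct, because two adjacent components whose
heavy branches contain each other have disjoint heavy branches; so the tree would have as many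
edges as vertices.
-/

namespace SimpleGraph

variable {V : Type*} {G : SimpleGraph V} {s : Set V}

lemma exists_isPath_of_preconnected_induce (hs : (G.induce s).Preconnected) {u v : V}
    (hu : u ∈ s) (hv : v ∈ s) : ∃ p : G.Walk u v, p.IsPath ∧ ∀ w ∈ p.support, w ∈ s := by
  classical
  obtain ⟨p⟩ := hs ⟨u, hu⟩ ⟨v, hv⟩
  refine ⟨p.toPath.1.map (Embedding.induce s).toHom,
    (Walk.isPath_map_iff_of_injective Subtype.val_injective).2 p.toPath.2, fun w hw => ?_⟩
  replace hw : w ∈ p.toPath.1.support.map (Embedding.induce (G := G) s).toHom := by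
    rwa [← Walk.support_map]
  obtain ⟨⟨w, hws⟩, -, rfl⟩ := List.mem_map.1 hw
  exact hws

lemma connected_induce_of_forall_exists_walk {u : V} (hu : u ∈ s)
    (h : ∀ v ∈ s, ∃ p : G.Walk u v, ∀ w ∈ p.support, w ∈ s) : (G.induce s).Connected :=
  induce_connected_of_patches u hu fun {v} hv => by
    obtain ⟨p, hp⟩ := h v hv
    exact ⟨{w | w ∈ p.support}, hp, p.start_mem_support, p.end_mem_support,
      p.connected_induce_support.preconnected _ _⟩

lemma Connected.induce_insert (hs : (G.induce s).Connected) {u v : V} (hu : u ∈ s)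
    (huv : G.Adj u v) : (G.induce (insert v s)).Connected := by
  rw [Set.insert_eq, Set.union_comm]
  exact connected_induce_union hs.preconnected Preconnected.of_subsingleton hu rfl huv

lemma IsAcyclic.card_edgeFinset_inter_sym2_add_one [Fintype V] [DecidableEq V]
    [DecidableRel G.Adj] (hG : G.IsAcyclic) {t : Finset V} (ht : (G.induce (t : Set V)).Connected) :
    #(G.edgeFinset ∩ t.sym2) + 1 = #t := by
  rw [← filter_edgeFinset_toFinset_subset, card_filter_edgeFinset_toFinset_subset,
    IsTree.card_edgeFinset ⟨ht, hG.induce _⟩]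
  simp

end SimpleGraph

namespace NodalCurve

open SimpleGraph

variable {C : NodalCurve}

lemma graph_adj {u v : C.V} : C.graph.Adj u v ↔ u ≠ v ∧ ∃ n, C.ends n = s(u, v) := by
  simp only [graph, fromRel_adj, Sym2.eq_swap (a := v), or_self]

lemma endsIn_eq_two_iff {S : Finset C.V} {n : C.N} : C.endsIn S n = 2 ↔ C.ends n ∈ S.sym2 := by
  rw [endsIn]
  induction C.ends n using Sym2.ind with
  | h a b => simp only [Sym2.lift_mk, Finset.mk_mem_sym2_iff]; split_ifs <;> simp_all

lemma endsIn_eq_one_iff {S : Finset C.V} {n : C.N} :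
    C.endsIn S n = 1 ↔ ∃ a ∈ S, ∃ b ∉ S, C.ends n = s(a, b) := by
  rw [endsIn]
  induction C.ends n using Sym2.ind with
  | h a b =>
    simp only [Sym2.lift_mk, Sym2.eq_iff]
    split_ifs <;> grind

lemma range_ends (hC : ∀ n, ¬ (C.ends n).IsDiag) : Set.range C.ends = C.graph.edgeSet := by
  ext e
  induction e using Sym2.ind with
  | h a b =>
    rw [mem_edgeSet, graph_adj]
    constructor
    · rintro ⟨n, hn⟩
      exact ⟨fun hab => hC n (hn ▸ Sym2.mk_isDiag_iff.2 hab), n, hn⟩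
    · rintro ⟨-, n, hn⟩
      exact ⟨n, hn⟩

lemma connectedSub_singleton (v : C.V) : C.connectedSub {v} := by
  rw [connectedSub, coe_singleton]
  exact connected_induce_of_forall_exists_walk rfl fun _ hz => by
    subst hz
    exact ⟨Walk.nil, by simp⟩

lemma connectedSub_univ (hconn : C.Conn) : C.connectedSub univ := by
  obtain ⟨y⟩ := hconn.nonempty
  exact connected_induce_of_forall_exists_walk (mem_coe.2 (mem_univ y)) fun z _ =>
    ⟨(hconn.preconnected y z).some, fun v _ => mem_coe.2 (mem_univ v)⟩

open Classical in
lemma internalNodes_eq_card_edgeFinset_inter_sym2 (hinj : Function.Injective C.ends)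
    (hC : ∀ n, ¬ (C.ends n).IsDiag) (S : Finset C.V) :
    C.internalNodes S = #(C.graph.edgeFinset ∩ S.sym2) := by
  rw [internalNodes, ← card_image_of_injective _ hinj]
  congr 1
  ext e
  simp only [mem_image, mem_filter, mem_univ, true_and, mem_inter, mem_edgeFinset,
    ← range_ends hC, Set.mem_range, endsIn_eq_two_iff]
  grind

lemma genusSub_eq_sum (hct : C.CompactType) {S : Finset C.V} (hS : C.connectedSub S) :
    C.genusSub S = ∑ v ∈ S, (C.w v : ℤ) := by
  classical
  have h := hct.2.2.isAcyclic.card_edgeFinset_inter_sym2_add_one hS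
  rw [← internalNodes_eq_card_edgeFinset_inter_sym2 hct.1 hct.2.1] at h
  rw [genusSub]
  omega

lemma genusSub_univ : C.genusSub univ = C.genus := by
  have h : C.internalNodes univ = Fintype.card C.N := by
    rw [internalNodes, filter_true_of_mem fun n _ => endsIn_eq_two_iff.2 (by simp),
      card_univ]
  rw [genusSub, genus, h, card_univ]

lemma genus_eq_sum (hconn : C.Conn) (hct : C.CompactType) : C.genus = ∑ v, (C.w v : ℤ) := by
  rw [← genusSub_univ, genusSub_eq_sum hct (connectedSub_univ hconn)]

lemma genusSub_le_genusSub (hct : C.CompactType) {A B : Finset C.V} (hA : C.connectedSub A)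
    (hB : C.connectedSub B) (hAB : A ⊆ B) : C.genusSub A ≤ C.genusSub B := by
  rw [genusSub_eq_sum hct hA, genusSub_eq_sum hct hB]
  exact sum_le_sum_of_subset_of_nonneg hAB fun _ _ _ => by positivity

lemma genusSub_add_genusSub_compl (hconn : C.Conn) (hct : C.CompactType) {S : Finset C.V}
    (hS : C.connectedSub S) (hSc : C.connectedSub Sᶜ) :
    C.genusSub S + C.genusSub Sᶜ = C.genus := by
  rw [genusSub_eq_sum hct hS, genusSub_eq_sum hct hSc, sum_add_sum_compl, genus_eq_sum hconn hct]

lemma genusSub_add_genusSub_le_genus (hconn : C.Conn) (hct : C.CompactType) {S T : Finset C.V}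
    (hS : C.connectedSub S) (hT : C.connectedSub T) (hST : Disjoint S T) :
    C.genusSub S + C.genusSub T ≤ C.genus := by
  rw [genusSub_eq_sum hct hS, genusSub_eq_sum hct hT, ← sum_union hST, genus_eq_sum hconn hct]
  exact sum_le_sum_of_subset_of_nonneg (subset_univ _) fun _ _ _ => by positivity

section complComponent

variable {x : C.V} {S : Finset C.V}

lemma exists_complComponent_superset {A : Finset C.V} (hA : C.connectedSub A) (hxA : x ∉ A) :
    ∃ T, C.complComponent x T ∧ A ⊆ T := by
  obtain ⟨T, hAT, ⟨hT, hxT⟩, hmax⟩ :=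
    Finite.exists_le_maximal (p := fun T : Finset C.V => C.connectedSub T ∧ x ∉ T) ⟨hA, hxA⟩
  obtain ⟨⟨a, ha⟩⟩ := hA.nonempty
  refine ⟨T, ⟨hxT, ⟨a, hAT ha⟩, hT, fun u hu v huv hvx => ?_⟩, hAT⟩
  have hins : C.connectedSub (insert v T) := by
    rw [connectedSub, coe_insert]
    exact hT.induce_insert hu huv
  exact hmax ⟨hins, by simp [hvx.symm, hxT]⟩ (subset_insert v T) (mem_insert_self v T)

lemma complComponent.exists_adj (hS : C.complComponent x S) (hconn : C.Conn) :
    ∃ a ∈ S, C.graph.Adj a x := by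
  obtain ⟨u, hu⟩ := hS.2.1
  obtain ⟨d, -, hd, hdS⟩ := (hconn.preconnected u x).some.exists_boundary_dart S hu hS.1
  have hdx : d.snd = x := by
    by_contra h
    exact hdS (hS.2.2.2 _ hd _ d.adj h)
  exact ⟨d.fst, hd, hdx ▸ d.adj⟩

lemma complComponent.exists_walk_compl (hS : C.complComponent x S) {u : C.V} (hu : u ∉ S)
    (p : C.graph.Walk u x) : ∃ q : C.graph.Walk u x, ∀ v ∈ q.support, v ∉ S := by
  induction p with
  | nil => exact ⟨Walk.nil, by simpa using hu⟩
  | @cons u b x hub p ih =>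
    by_cases hux : u = x
    · subst hux
      exact ⟨Walk.nil, by simpa using hu⟩
    obtain ⟨q, hq⟩ := ih hS fun hb => hu (hS.2.2.2 b hb u hub.symm hux)
    exact ⟨Walk.cons hub q, by simpa [hu] using hq⟩

lemma complComponent.connectedSub_compl (hS : C.complComponent x S) (hconn : C.Conn) :
    C.connectedSub Sᶜ :=
  connected_induce_of_forall_exists_walk (u := x) (by simpa using hS.1) fun z hz => by
    obtain ⟨q, hq⟩ := hS.exists_walk_compl (by simpa using hz) (hconn.preconnected z x).some
    exact ⟨q.reverse, by simpa using hq⟩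

lemma complComponent.eq_of_adj (hS : C.complComponent x S) (hct : C.CompactType) {a b : C.V}
    (ha : a ∈ S) (hb : b ∈ S) (hax : C.graph.Adj a x) (hbx : C.graph.Adj b x) : a = b := by
  obtain ⟨q, hq, hqS⟩ := exists_isPath_of_preconnected_induce hS.2.2.1.preconnected ha hb
  have hbp := hct.2.2.isAcyclic.mem_support_of_ne_mem_support_of_adj_of_isPath
    (Path.singleton hax).2 hq hbx.symm fun h => hS.1 (hqS x h)
  simp only [Path.singleton, Walk.support_cons, Walk.support_nil, List.mem_cons,
    List.not_mem_nil, or_false] at hbp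
  exact (hbp.resolve_right hbx.ne).symm

lemma complComponent.endsIn_eq_one_iff (hS : C.complComponent x S) {n : C.N} :
    C.endsIn S n = 1 ↔ ∃ a ∈ S, C.ends n = s(a, x) := by
  rw [NodalCurve.endsIn_eq_one_iff]
  constructor
  · rintro ⟨a, ha, b, hb, hn⟩
    have hab : C.graph.Adj a b := graph_adj.2 ⟨fun h => hb (h ▸ ha), n, hn⟩
    obtain rfl : b = x := by
      by_contra h
      exact hb (hS.2.2.2 a ha b hab h)
    exact ⟨a, ha, hn⟩
  · rintro ⟨a, ha, hn⟩
    exact ⟨a, ha, x, hS.1, hn⟩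

lemma complComponent.isTail (hS : C.complComponent x S) (hconn : C.Conn) (hct : C.CompactType) :
    C.isTail S := by
  obtain ⟨a, ha, hax⟩ := hS.exists_adj hconn
  obtain ⟨-, n, hn⟩ := graph_adj.1 hax
  rw [NodalCurve.isTail, k, card_eq_one]
  refine ⟨n, eq_singleton_iff_unique_mem.2 ⟨?_, fun m hm => ?_⟩⟩
  · simpa using hS.endsIn_eq_one_iff.2 ⟨a, ha, hn⟩
  · obtain ⟨b, hb, hm⟩ := hS.endsIn_eq_one_iff.1 (mem_filter.1 hm).2
    have hbx : C.graph.Adj b x := graph_adj.2 ⟨fun h => hS.1 (h ▸ hb), m, hm⟩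
    obtain rfl := hS.eq_of_adj hct hb ha hbx hax
    exact hct.1 (hm.trans hn.symm)

lemma complComponent.disjoint (hS : C.complComponent x S) (hct : C.CompactType) {y : C.V}
    (hxy : C.graph.Adj x y) (hyS : y ∈ S) {T : Finset C.V} (hT : C.complComponent y T)
    (hxT : x ∈ T) : Disjoint S T := by
  rw [Finset.disjoint_left]
  intro z hzS hzT
  obtain ⟨p, hp, hpT⟩ := exists_isPath_of_preconnected_induce hT.2.2.1.preconnected hzT hxT
  obtain ⟨q, hq, hqS⟩ := exists_isPath_of_preconnected_induce hS.2.2.1.preconnected hzS hyS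
  exact hT.1 (hpT y (hct.2.2.isAcyclic.mem_support_of_ne_mem_support_of_adj_of_isPath hp hq hxy
    fun h => hS.1 (hqS x h)))

end complComponent

/-- `[C] ∈ Δ_{g/2}`. -/
def MemDeltaHalf (C : NodalCurve) : Prop :=
  ∃ (n : C.N) (S : Finset C.V), C.endsIn S n = 1 ∧ C.isTail S ∧ C.connectedSub S ∧
    C.connectedSub Sᶜ ∧ 2 * C.genusSub S = C.genus ∧ 2 * C.genusSub Sᶜ = C.genus

lemma complComponent.memDeltaHalf {x : C.V} {S : Finset C.V} (hS : C.complComponent x S)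
    (hconn : C.Conn) (hct : C.CompactType) (hg : 2 * C.genusSub S = C.genus) :
    C.MemDeltaHalf := by
  obtain ⟨a, ha, hax⟩ := hS.exists_adj hconn
  obtain ⟨-, n, hn⟩ := graph_adj.1 hax
  have hSc := hS.connectedSub_compl hconn
  have hsum := genusSub_add_genusSub_compl hconn hct hS.2.2.1 hSc
  exact ⟨n, S, hS.endsIn_eq_one_iff.2 ⟨a, ha, hn⟩, hS.isTail hconn hct, hS.2.2.1, hSc, hg,
    by linarith⟩

section central

variable {x : C.V}

lemma central.two_mul_genusSub_lt (hx : C.central x) (hct : C.CompactType) {A : Finset C.V}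
    (hA : C.connectedSub A) (hxA : x ∉ A) : 2 * C.genusSub A < C.genus := by
  obtain ⟨T, hT, hAT⟩ := exists_complComponent_superset hA hxA
  linarith [hx T hT, genusSub_le_genusSub hct hA hT.2.2.1 hAT]

lemma central.not_memDeltaHalf (hx : C.central x) (hct : C.CompactType) : ¬ C.MemDeltaHalf := by
  rintro ⟨-, S, -, -, hS, hSc, hgS, hgSc⟩
  by_cases hxS : x ∈ S
  · exact (hx.two_mul_genusSub_lt hct hSc (by simpa using hxS)).ne hgSc
  · exact (hx.two_mul_genusSub_lt hct hS hxS).ne hgS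

lemma central.eq (hx : C.central x) (hconn : C.Conn) (hct : C.CompactType) {y : C.V}
    (hy : C.central y) : x = y := by
  by_contra hxy
  obtain ⟨S, hS, hyS⟩ := exists_complComponent_superset (x := x) (connectedSub_singleton y)
    (by simpa [eq_comm] using hxy)
  have hSc := hS.connectedSub_compl hconn
  have hgSc := hy.two_mul_genusSub_lt hct hSc (by simpa using hyS)
  linarith [hx S hS, genusSub_add_genusSub_compl hconn hct hS.2.2.1 hSc]

end central

open Classical in
lemma exists_central (hconn : C.Conn) (hct : C.CompactType) (hΔ : ¬ C.MemDeltaHalf) :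
    ∃ x, C.central x := by
  by_contra! hnone
  have heavy : ∀ x, ∃ S, C.complComponent x S ∧ C.genus < 2 * C.genusSub S := fun x => by
    obtain ⟨S, hS, hge⟩ : ∃ S, C.complComponent x S ∧ C.genus ≤ 2 * C.genusSub S := by
      simpa [central] using hnone x
    exact ⟨S, hS, hge.lt_of_ne fun h => hΔ (hS.memDeltaHalf hconn hct h.symm)⟩
  choose S hS hheavy using heavy
  choose a ha hadj using fun x => (hS x).exists_adj hconn
  have hinj : Function.Injective fun x => s(a x, x) := by
    intro x y hxy
    by_contra hne
    obtain ⟨hay, hya⟩ : a x = y ∧ x = a y := by simpa [Sym2.eq_iff, hne] using hxy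
    have hyS : y ∈ S x := hay ▸ ha x
    have hxS : x ∈ S y := by rw [hya]; exact ha y
    have hdisj := (hS x).disjoint hct (hay ▸ (hadj x).symm) hyS (hS y) hxS
    linarith [hheavy x, hheavy y,
      genusSub_add_genusSub_le_genus hconn hct (hS x).2.2.1 (hS y).2.2.1 hdisj]
  have hcard := card_le_card_of_injOn (s := univ) (t := C.graph.edgeFinset) _
    (fun x _ => mem_edgeFinset.2 (hadj x)) hinj.injOn
  have htree := hct.2.2.card_edgeFinset
  rw [card_univ] at hcard
  omega

end NodalCurve

theorem unique_central_iff_not_delta_general (C : NodalCurve) (hconn : C.Conn)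
    (hct : C.CompactType) :
    (∃! x : C.V, C.central x) ↔
      ¬ ∃ (n : C.N) (S : Finset C.V), C.endsIn S n = 1 ∧
          C.isTail S ∧ C.connectedSub S ∧ C.connectedSub Sᶜ ∧
          2 * C.genusSub S = C.genus ∧ 2 * C.genusSub Sᶜ = C.genus := by
  constructor
  · rintro ⟨x, hx, -⟩
    exact hx.not_memDeltaHalf hct
  · intro hΔ
    obtain ⟨x, hx⟩ := NodalCurve.exists_central hconn hct hΔ
    exact ⟨x, hx, fun y hy => hy.eq hconn hct hx⟩

/-- a stable curve of compact type of genus `g ≥ 2` has exactly one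
central component iff no separating node has both attached tails of genus `g/2`. -/
theorem unique_central_iff_not_delta (C : NodalCurve) (hconn : C.Conn)
    (hct : C.CompactType) (hst : C.Stable) (hg : 2 ≤ C.genus) :
    (∃! x : C.V, C.central x) ↔
      ¬ ∃ (n : C.N) (S : Finset C.V), C.endsIn S n = 1 ∧
          C.isTail S ∧ C.connectedSub S ∧ C.connectedSub Sᶜ ∧
          2 * C.genusSub S = C.genus ∧ 2 * C.genusSub Sᶜ = C.genus :=
  unique_central_iff_not_delta_general C hconn hct
end

section
/- Let C be a nodal curve of genus g with irreducible components X_1,…,X_γ, and let L be a line bundle of total degree d on C. Then L is semistable with respect to the canonical polarization E_d if and only if for every nonempty proper subcurve Y of C one has |deg(L|_Y) − (d/(2g−2))·deg(ω_C|_Y)| ≤ k_Y/2. -/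
open Finset

/-!
By adjunction `χ(O_Y) = (k_Y - deg(ω_C|_Y))/2`, so the inequality
`χ(L|_Y) ≥ -deg(E_d|_Y)/rank(E_d)` rearranges to the lower half
`d_Y - d·deg(ω_C|_Y)/(2g-2) ≥ -k_Y/2` of the basic inequality. The upper half at `Y` is the
lower half at the complementary subcurve `Y'`: `k_{Y'} = k_Y`, while the deviation
`d_Y - d·deg(ω_C|_Y)/(2g-2)` changes sign because `d_Y` and `deg(ω_C|_Y)` are additive over
`Y ∪ Y'` with totals `d` and `2g - 2`.
-/

namespace NodalCurve

variable (C : NodalCurve)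

lemma endsIn_add_endsIn_compl (S : Finset C.V) (n : C.N) :
    C.endsIn S n + C.endsIn Sᶜ n = 2 := by
  unfold endsIn
  induction C.ends n using Sym2.ind with
  | _ a b => by_cases ha : a ∈ S <;> by_cases hb : b ∈ S <;> simp [ha, hb]

lemma sum_endsIn (S : Finset C.V) :
    ∑ n, C.endsIn S n = C.k S + 2 * C.internalNodes S := by
  rw [k, internalNodes, card_filter, card_filter, mul_sum, ← sum_add_distrib]
  refine sum_congr rfl fun n _ => ?_
  have := C.endsIn_add_endsIn_compl S n
  split_ifs <;> omega

lemma k_compl (S : Finset C.V) : C.k Sᶜ = C.k S := by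
  refine congrArg card (filter_congr fun n _ => ?_)
  have := C.endsIn_add_endsIn_compl S n
  omega

lemma degω_eq_k_sub_two_mul_chiO (S : Finset C.V) :
    C.degω S = C.k S - 2 * C.chiO S := by
  have hends : ∑ n, (C.endsIn S n : ℤ) = C.k S + 2 * C.internalNodes S := by
    exact_mod_cast C.sum_endsIn S
  rw [degω, chiO, hends, sum_sub_distrib, ← mul_sum, sum_const, nsmul_eq_mul]
  ring

lemma degω_add_degω_compl (S : Finset C.V) : C.degω S + C.degω Sᶜ = 2 * C.genus - 2 := by
  have hends : ∑ n, ((C.endsIn S n : ℤ) + C.endsIn Sᶜ n) = 2 * Fintype.card C.N := by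
    simp_rw [← Nat.cast_add, endsIn_add_endsIn_compl, sum_const, card_univ, nsmul_eq_mul]
    ring
  rw [degω, degω, add_add_add_comm, sum_add_sum_compl, ← sum_add_distrib, hends, genus,
    sum_sub_distrib, ← mul_sum, sum_const, card_univ, nsmul_eq_mul]
  ring

lemma degSub_add_degSub_compl (e : C.V → ℤ) (S : Finset C.V) :
    C.degSub e S + C.degSub e Sᶜ = C.totalDeg e :=
  sum_add_sum_compl S e

def degDeviation (e : C.V → ℤ) (S : Finset C.V) : ℚ :=
  (C.degSub e S : ℚ) - (C.totalDeg e : ℚ) * (C.degω S : ℚ) / (2 * (C.genus : ℚ) - 2)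

variable {C}

lemma cast_genus_sub_one_ne_zero (hg : C.genus ≠ 1) : (C.genus : ℚ) - 1 ≠ 0 := by
  rw [sub_ne_zero]; exact_mod_cast hg

lemma degDeviation_compl (hg : C.genus ≠ 1) (e : C.V → ℤ) (S : Finset C.V) :
    C.degDeviation e Sᶜ = -C.degDeviation e S := by
  have hden := cast_genus_sub_one_ne_zero hg
  have hω : (C.degω Sᶜ : ℚ) = 2 * C.genus - 2 - C.degω S := by
    rw [eq_sub_iff_add_eq']; exact_mod_cast C.degω_add_degω_compl S
  have hd : (C.degSub e Sᶜ : ℚ) = C.totalDeg e - C.degSub e S := by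
    rw [eq_sub_iff_add_eq']; exact_mod_cast C.degSub_add_degSub_compl e S
  rw [degDeviation, degDeviation, hω, hd]
  field_simp
  ring

lemma semistableAt_iff_of_compl (hg : C.genus ≠ 1) (e : C.V → ℤ) (S : Finset C.V) :
    C.semistableAt e S ↔
      -((C.k S : ℚ) / 2) ≤ C.degDeviation e S ∧ -((C.k Sᶜ : ℚ) / 2) ≤ C.degDeviation e Sᶜ := by
  rw [degDeviation_compl hg, k_compl, neg_le_neg_iff, ← abs_le]
  rfl

lemma polarization_le_chi_iff (hg : C.genus ≠ 1) (e : C.V → ℤ) (S : Finset C.V) :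
    (if C.totalDeg e = C.genus - 1 then (0 : ℚ)
        else -(((C.genus - 1 - C.totalDeg e) * C.degω S : ℤ) : ℚ) / (2 * (C.genus : ℚ) - 2))
        ≤ ((C.chiO S + C.degSub e S : ℤ) : ℚ) ↔
      -((C.k S : ℚ) / 2) ≤ C.degDeviation e S := by
  have hden := cast_genus_sub_one_ne_zero hg
  -- for `d = g - 1` the numerator of the `else` branch vanishes as well
  have hbound : (if C.totalDeg e = C.genus - 1 then (0 : ℚ)
        else -(((C.genus - 1 - C.totalDeg e) * C.degω S : ℤ) : ℚ) / (2 * (C.genus : ℚ) - 2))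
        = -(((C.genus - 1 - C.totalDeg e) * C.degω S : ℤ) : ℚ) / (2 * (C.genus : ℚ) - 2) := by
    split_ifs with hd
    · rw [hd, sub_self, zero_mul, Int.cast_zero, neg_zero, zero_div]
    · rfl
  have hχ : (C.chiO S : ℚ) = (C.k S - C.degω S) / 2 := by
    rw [C.degω_eq_k_sub_two_mul_chiO S]; push_cast; ring
  have hdiff : ((C.chiO S + C.degSub e S : ℤ) : ℚ)
      - -(((C.genus - 1 - C.totalDeg e) * C.degω S : ℤ) : ℚ) / (2 * (C.genus : ℚ) - 2)
      = C.k S / 2 + C.degDeviation e S := by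
    rw [degDeviation]
    push_cast
    rw [hχ]
    field_simp
    ring
  rw [hbound, ← sub_nonneg, hdiff, ← neg_le_iff_add_nonneg']

end NodalCurve

open Finset in
theorem semistable_iff_basic_inequality_general (C : NodalCurve)
    (hg : 2 ≤ C.genus) (e : C.V → ℤ) :
    (∀ S : Finset C.V, S.Nonempty → S ≠ univ →
        (if C.totalDeg e = C.genus - 1 then (0 : ℚ)
          else -(((C.genus - 1 - C.totalDeg e) * C.degω S : ℤ) : ℚ)
              / (2 * (C.genus : ℚ) - 2))
          ≤ ((C.chiO S + C.degSub e S : ℤ) : ℚ)) ↔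
      (∀ S : Finset C.V, S.Nonempty → S ≠ univ → C.semistableAt e S) := by
  have hg1 : C.genus ≠ 1 := by omega
  simp only [NodalCurve.polarization_le_chi_iff hg1, NodalCurve.semistableAt_iff_of_compl hg1]
  refine ⟨fun h S hS hSu => ⟨h S hS hSu, h Sᶜ ?_ ?_⟩, fun h S hS hSu => (h S hS hSu).1⟩
  · rwa [← compl_ne_univ_iff_nonempty, compl_compl]
  · rwa [compl_ne_univ_iff_nonempty]

open Finset in
/-- a line bundle `L` (of multidegree `e`, total degree `d`) is semistable
with respect to the canonical polarization `E_d` (i.e. `χ(L|_Y) ≥ -deg(E_d|_Y)/rank E_d`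
for every nonempty proper subcurve `Y`) iff
`|deg(L|_Y) - (d/(2g-2))·deg(ω_C|_Y)| ≤ k_Y/2` for every nonempty proper subcurve `Y`. -/
theorem semistable_iff_basic_inequality (C : NodalCurve) (hconn : C.Conn)
    (hg : 2 ≤ C.genus) (e : C.V → ℤ) :
    (∀ S : Finset C.V, S.Nonempty → S ≠ univ →
        (if C.totalDeg e = C.genus - 1 then (0 : ℚ)
          else -(((C.genus - 1 - C.totalDeg e) * C.degω S : ℤ) : ℚ)
              / (2 * (C.genus : ℚ) - 2))
          ≤ ((C.chiO S + C.degSub e S : ℤ) : ℚ)) ↔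
      (∀ S : Finset C.V, S.Nonempty → S ≠ univ → C.semistableAt e S) :=
  semistable_iff_basic_inequality_general C hg e
end

section
/- Let C be a binary curve of genus g ≥ 2 (two smooth rational components X_1, X_2 meeting at g+1 nodes q_1,…,q_{g+1}), and let L be a line bundle with L|_{X_1} ≅ O_{X_1}(q_1+⋯+q_{g+1}) and L|_{X_2} ≅ O_{X_2}. Then h^0(C, L) = 2. -/
/-!
Write a section as `(p, c)` with `deg p ≤ g + 1` and `p (a i) = t i * c`. Subtracting `c` times
the Lagrange interpolant of `t` at the nodes leaves a polynomial of degree `≤ g + 1` vanishing at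
the `g + 1` nodes, hence a scalar multiple of the nodal polynomial `∏ (X - a i)`. So
`(α, c) ↦ (α • ∏ (X - a i) + c • interpolant, c)` is an isomorphism from `k²` onto the
sections.
-/

open Polynomial

/-- Model of `H^0(C, L)` for a binary curve `C` of genus `g` (two copies of `P^1`
glued at the `g+1` nodes `q_i`), with `L|_{X_1} ≅ O_{X_1}(q_1 + ⋯ + q_{g+1})` and
`L|_{X_2} ≅ O_{X_2}`. Choosing a coordinate on `X_1` placing the nodes at the scalars
`a i` and trivializing, sections of `L|_{X_1}` are polynomials of degree `≤ g+1`,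
sections of `L|_{X_2}` are constants, and a global section is a pair `(p, c)` matching
at the nodes via the (nonzero) gluing constants `t i`: `p(a i) = t i * c`. -/
noncomputable def binarySections (k : Type) [Field k] (g : ℕ)
    (a : Fin (g + 1) → k) (t : Fin (g + 1) → k) : Submodule k (k[X] × k) where
  carrier := {x | x.1 ∈ Polynomial.degreeLE k ((g + 1 : ℕ) : WithBot ℕ) ∧
    ∀ i : Fin (g + 1), x.1.eval (a i) = t i * x.2}
  add_mem' := by
    rintro x y ⟨hx1, hx2⟩ ⟨hy1, hy2⟩
    refine ⟨Submodule.add_mem _ hx1 hy1, fun i => ?_⟩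
    show (x.1 + y.1).eval (a i) = t i * (x.2 + y.2)
    simp [hx2 i, hy2 i, mul_add]
  zero_mem' := by
    refine ⟨Submodule.zero_mem _, fun i => ?_⟩
    show (0 : k[X]).eval (a i) = t i * (0 : k)
    simp
  smul_mem' := by
    rintro c x ⟨hx1, hx2⟩
    refine ⟨Submodule.smul_mem _ c hx1, fun i => ?_⟩
    show (c • x.1).eval (a i) = t i * (c • x.2)
    simp [hx2 i]
    ring

open Finset Lagrange

namespace Lagrange

variable {k ι : Type*} [Field k] {s : Finset ι} {v : ι → k}

theorem nodal_dvd_of_eval_eq_zero (hvs : Set.InjOn v s) {p : k[X]}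
    (hp : ∀ i ∈ s, p.eval (v i) = 0) : nodal s v ∣ p := by
  rw [← modByMonic_eq_zero_iff_dvd nodal_monic]
  refine eq_zero_of_degree_lt_of_eval_index_eq_zero s hvs
    ((degree_modByMonic_lt p nodal_monic).trans_eq degree_nodal) fun i hi => ?_
  rw [modByMonic_eq_sub_mul_div, eval_sub, eval_mul, hp i hi,
    eval_nodal_at_node hi, zero_mul, sub_zero]

theorem exists_eq_smul_nodal_of_degree_le (hvs : Set.InjOn v s) {p : k[X]}
    (hdeg : p.degree ≤ #s) (hp : ∀ i ∈ s, p.eval (v i) = 0) :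
    ∃ c : k, p = c • nodal s v := by
  obtain ⟨q, rfl⟩ := nodal_dvd_of_eval_eq_zero hvs hp
  rcases eq_or_ne q 0 with rfl | hq
  · exact ⟨0, by simp⟩
  have hq0 : q.natDegree = 0 := by
    have := natDegree_le_of_degree_le hdeg
    rw [natDegree_mul nodal_ne_zero hq, natDegree_nodal] at this
    omega
  exact ⟨q.coeff 0, by rw [smul_eq_C_mul, mul_comm, ← eq_C_of_natDegree_eq_zero hq0]⟩

theorem exists_eq_smul_nodal_add_smul_interpolate [DecidableEq ι] (hvs : Set.InjOn v s)
    {t : ι → k} {p : k[X]} {c : k} (hdeg : p.degree ≤ #s)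
    (hp : ∀ i ∈ s, p.eval (v i) = t i * c) :
    ∃ α : k, p = α • nodal s v + c • interpolate s v t := by
  have hdeg' : (p - c • interpolate s v t).degree ≤ #s :=
    (degree_sub_le _ _).trans <|
      max_le hdeg ((degree_smul_le _ _).trans (degree_interpolate_lt t hvs).le)
  obtain ⟨α, hα⟩ := exists_eq_smul_nodal_of_degree_le hvs hdeg' fun i hi => by
    rw [eval_sub, eval_smul, eval_interpolate_at_node t hvs hi, hp i hi, smul_eq_mul, mul_comm,
      sub_self]
  exact ⟨α, by rw [← hα, sub_add_cancel]⟩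

end Lagrange

section

variable {k ι : Type*} [Field k] [DecidableEq ι]

noncomputable def nodalInterpolatePair (s : Finset ι) (v t : ι → k) :
    k × k →ₗ[k] k[X] × k :=
  ((LinearMap.fst k k k).smulRight (nodal s v) +
    (LinearMap.snd k k k).smulRight (interpolate s v t)).prod (LinearMap.snd k k k)

theorem nodalInterpolatePair_apply (s : Finset ι) (v t : ι → k) (x : k × k) :
    nodalInterpolatePair s v t x = (x.1 • nodal s v + x.2 • interpolate s v t, x.2) :=
  rfl

theorem nodalInterpolatePair_injective (s : Finset ι) (v t : ι → k) :
    Function.Injective (nodalInterpolatePair s v t) := by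
  rw [← LinearMap.ker_eq_bot, LinearMap.ker_eq_bot']
  rintro ⟨α, β⟩ h
  simp only [nodalInterpolatePair_apply, Prod.mk_eq_zero] at h
  obtain ⟨hα, rfl⟩ := h
  rw [zero_smul, add_zero, smul_eq_zero] at hα
  simpa using hα.resolve_right nodal_ne_zero

end

theorem range_nodalInterpolatePair_eq_binarySections {k : Type} [Field k] {g : ℕ}
    {a : Fin (g + 1) → k} (ha : Function.Injective a) (t : Fin (g + 1) → k) :
    LinearMap.range (nodalInterpolatePair univ a t) = binarySections k g a t := by
  have hcard : #(univ : Finset (Fin (g + 1))) = g + 1 := card_fin _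
  ext ⟨p, c⟩
  constructor
  · rintro ⟨⟨α, β⟩, hx⟩
    rw [nodalInterpolatePair_apply, Prod.mk.injEq] at hx
    obtain ⟨rfl, rfl⟩ := hx
    refine ⟨Submodule.add_mem _ (Submodule.smul_mem _ _ ?_) (Submodule.smul_mem _ _ ?_),
      fun i => ?_⟩
    · rw [mem_degreeLE, degree_nodal, hcard]
    · exact mem_degreeLE.2 <| (degree_interpolate_lt t ha.injOn).le.trans_eq (by rw [hcard])
    · rw [eval_add, eval_smul, eval_smul, eval_nodal_at_node (mem_univ i),
        eval_interpolate_at_node t ha.injOn (mem_univ i), smul_zero, zero_add, smul_eq_mul,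
        mul_comm]
  · rintro ⟨hdeg, hp : ∀ i, p.eval (a i) = t i * c⟩
    rw [mem_degreeLE, ← hcard] at hdeg
    obtain ⟨α, rfl⟩ :=
      exists_eq_smul_nodal_add_smul_interpolate ha.injOn hdeg fun i _ => hp i
    exact ⟨(α, c), rfl⟩

theorem binary_curve_h0_general (k : Type) [Field k] (g : ℕ)
    (a : Fin (g + 1) → k) (ha : Function.Injective a)
    (t : Fin (g + 1) → k) :
    Module.finrank k (binarySections k g a t) = 2 := by
  rw [← range_nodalInterpolatePair_eq_binarySections ha t,
    LinearMap.finrank_range_of_inj (nodalInterpolatePair_injective _ _ _),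
    Module.finrank_prod, Module.finrank_self]

/-- for a binary curve `C` of genus `g ≥ 2` and `L` with
`L|_{X_1} ≅ O_{X_1}(q_1 + ⋯ + q_{g+1})`, `L|_{X_2} ≅ O_{X_2}`, one has `h^0(C, L) = 2`.
The nodes are distinct (`a` injective) and the gluing constants `t i` are nonzero. -/
theorem binary_curve_h0 (k : Type) [Field k] (g : ℕ) (hg : 2 ≤ g)
    (a : Fin (g + 1) → k) (ha : Function.Injective a)
    (t : Fin (g + 1) → k) (ht : ∀ i, t i ≠ 0) :
    Module.finrank k (binarySections k g a t) = 2 :=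
  binary_curve_h0_general k g a ha t
end

section
/- Let T be a finite tree with weight function w: V(T) → ℕ and total weight g ≥ 2, such that every vertex v with w(v) = 0 has degree ≥ 3 in T. If no vertex of T is central (every vertex x has some component of T − x with weight ≥ g/2), then T has exactly two semicentral vertices, and they are adjacent. -/
open Finset

/-- `S` is (the vertex set of) a connected component of `T − x` (deletion of the
vertex `x`): nonempty, avoiding `x`, connected, and closed under adjacency away
from `x`. -/
def IsComplComponent {V : Type} [Fintype V] [DecidableEq V] (G : SimpleGraph V)
    (x : V) (S : Finset V) : Prop :=
  x ∉ S ∧ S.Nonempty ∧ (G.induce (S : Set V)).Connected ∧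
    ∀ u ∈ S, ∀ v : V, G.Adj u v → v ≠ x → v ∈ S

/-- A vertex `x` is central if every connected component of `T − x` has total
weight `< g/2`, where `g` is the total weight. -/
def IsCentralVertex {V : Type} [Fintype V] [DecidableEq V] (G : SimpleGraph V)
    (w : V → ℕ) (x : V) : Prop :=
  ∀ S : Finset V, IsComplComponent G x S → 2 * ∑ v ∈ S, w v < ∑ v, w v

/-- A vertex `x` is semicentral if every connected component of `T − x` has total
weight `≤ g/2`. -/
def IsSemicentralVertex {V : Type} [Fintype V] [DecidableEq V] (G : SimpleGraph V)
    (w : V → ℕ) (x : V) : Prop :=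
  ∀ S : Finset V, IsComplComponent G x S → 2 * ∑ v ∈ S, w v ≤ ∑ v, w v

/-!
Since no vertex is central, every vertex `x` has a component `S` of `T - x` of weight `≥ g/2`.
For the neighbour `y` of `x` in `S`, a heavy component of `T - y` either contains `x`, and then
both sides of the edge `xy` weigh exactly `g/2`, or lies strictly inside `S`; so this descent ends
at such a balanced edge, and both its endpoints are semicentral. For any other vertex `z`, say on
the side of `x`, the component of `T - z` containing `x` contains the side of `y`, the vertex `x`
and every component of `T - x` not containing `z`. These extras have positive weight: if
`w x = 0` then `x` has degree `≥ 3`, so a third component of `T - x` exists, and every such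
component contains a vertex of degree `≤ 2` in `T`, hence of positive weight. So `z` is not
semicentral.
-/

namespace SimpleGraph

section Graph

variable {V : Type*} {G : SimpleGraph V} {x y z u v : V}

theorem eq_of_reachable_deleteIncidenceSet (h : (G.deleteIncidenceSet x).Reachable x v) :
    x = v := by
  obtain ⟨p⟩ := h
  cases p with
  | nil => rfl
  | cons hadj _ => exact absurd rfl (deleteIncidenceSet_adj.mp hadj).2.1

theorem Walk.reachable_deleteIncidenceSet (p : G.Walk u v) (hx : x ∉ p.support) :
    (G.deleteIncidenceSet x).Reachable u v :=
  ⟨p.toDeleteEdges _ fun e he hex => by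
    obtain ⟨b, rfl⟩ := Sym2.mem_iff_exists.mp hex.2
    exact hx (p.fst_mem_support_of_mem_edges he)⟩

theorem IsAcyclic.not_reachable_deleteEdges (hG : G.IsAcyclic) (hxy : G.Adj x y) :
    ¬(G.deleteEdges {s(x, y)}).Reachable x y :=
  isBridge_iff.mp (isAcyclic_iff_forall_adj_isBridge.mp hG hxy)

theorem deleteIncidenceSet_le_deleteEdges (hxy : G.Adj x y) (hz : z ∈ s(x, y)) :
    G.deleteIncidenceSet z ≤ G.deleteEdges {s(x, y)} :=
  deleteEdges_anti (Set.singleton_subset_iff.mpr ⟨hxy, hz⟩)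

theorem IsTree.exists_degree_le_one [Fintype V] [DecidableRel G.Adj] (hG : G.IsTree) :
    ∃ v, G.degree v ≤ 1 := by
  cases subsingleton_or_nontrivial V
  · obtain ⟨v⟩ := hG.connected.nonempty
    exact ⟨v, card_le_one_of_subsingleton _⟩
  · exact (hG.exists_vert_degree_one_of_nontrivial).imp fun _ h => h.le

end Graph

section ComplComponent

variable {V : Type} [Fintype V] {G : SimpleGraph V} {x y z t u v : V} {S : Finset V}

/-- For `u ≠ x`, the component of `G - x` containing `u`; for `u = x` it is `{x}`. -/
noncomputable def complComponent (G : SimpleGraph V) (x u : V) : Finset V := by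
  classical exact {v | (G.deleteIncidenceSet x).Reachable u v}

theorem mem_complComponent :
    v ∈ G.complComponent x u ↔ (G.deleteIncidenceSet x).Reachable u v := by
  simp [complComponent]

theorem mem_complComponent_self : u ∈ G.complComponent x u :=
  mem_complComponent.mpr (Reachable.refl u)

theorem complComponent_eq_of_mem (h : v ∈ G.complComponent x u) :
    G.complComponent x u = G.complComponent x v := by
  ext t
  simp only [mem_complComponent]
  exact ⟨(mem_complComponent.mp h).symm.trans, (mem_complComponent.mp h).trans⟩

theorem notMem_complComponent (hu : u ≠ x) : x ∉ G.complComponent x u :=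
  fun h => hu (eq_of_reachable_deleteIncidenceSet (mem_complComponent.mp h).symm).symm

theorem disjoint_complComponent_of_notMem (h : u ∉ G.complComponent x v) :
    Disjoint (G.complComponent x u) (G.complComponent x v) :=
  Finset.disjoint_left.mpr fun _ htu htv =>
    h ((complComponent_eq_of_mem htu).trans (complComponent_eq_of_mem htv).symm ▸
      mem_complComponent_self)

theorem Connected.mem_complComponent_or (hG : G.Connected) (hxy : x ≠ y) (v : V) :
    v ∈ G.complComponent x y ∨ v ∈ G.complComponent y x := by
  classical
  obtain ⟨p, hp⟩ := (hG.preconnected v x).exists_isPath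
  by_cases hy : y ∈ p.support
  · left
    exact mem_complComponent.mpr
      ((p.takeUntil y hy).reachable_deleteIncidenceSet
        (p.endpoint_notMem_support_takeUntil hp hy hxy)).symm
  · exact Or.inr (mem_complComponent.mpr (p.reachable_deleteIncidenceSet hy).symm)

theorem IsAcyclic.disjoint_complComponent (hG : G.IsAcyclic) (hxy : G.Adj x y) :
    Disjoint (G.complComponent x y) (G.complComponent y x) :=
  Finset.disjoint_left.mpr fun _ hy hx => hG.not_reachable_deleteEdges hxy <|
    ((mem_complComponent.mp hx).mono
      (deleteIncidenceSet_le_deleteEdges hxy (Sym2.mem_mk_right x y))).trans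
    ((mem_complComponent.mp hy).mono
      (deleteIncidenceSet_le_deleteEdges hxy (Sym2.mem_mk_left x y))).symm

theorem IsAcyclic.eq_of_adj_of_mem_complComponent (hG : G.IsAcyclic) (hxy : G.Adj x y)
    (hxt : G.Adj x t) (ht : t ∈ G.complComponent x y) : t = y := by
  by_contra hty
  refine hG.not_reachable_deleteEdges hxy (Reachable.symm ?_)
  refine ((mem_complComponent.mp ht).mono
    (deleteIncidenceSet_le_deleteEdges hxy (Sym2.mem_mk_left x y))).trans (Adj.reachable ?_)
  simp [deleteEdges_adj, hxt.symm, hty, hxy.ne]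

variable [DecidableEq V] {w : V → ℕ}

theorem isComplComponent_complComponent (hu : u ≠ x) :
    IsComplComponent G x (G.complComponent x u) := by
  refine ⟨notMem_complComponent hu, ⟨u, mem_complComponent_self⟩, ?_,
    fun a ha b hab hb => ?_⟩
  · have hsupp : ((G.deleteIncidenceSet x).connectedComponentMk u).supp =
        (G.complComponent x u : Set V) := by
      ext v
      simp [ConnectedComponent.mem_supp_iff, ConnectedComponent.eq, mem_complComponent,
        reachable_comm]
    have hconn : ((G.deleteIncidenceSet x).induce
        ((G.deleteIncidenceSet x).connectedComponentMk u).supp).Connected :=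
      ((G.deleteIncidenceSet x).connectedComponentMk u).connected_toSimpleGraph
    rwa [hsupp, induce_deleteIncidenceSet_of_notMem G (mod_cast notMem_complComponent hu)] at hconn
  · have hax : a ≠ x := fun h => notMem_complComponent hu (h ▸ ha)
    exact mem_complComponent.mpr
      ((mem_complComponent.mp ha).trans (deleteIncidenceSet_adj.mpr ⟨hab, hax, hb⟩).reachable)

theorem _root_.IsComplComponent.eq_complComponent (hS : IsComplComponent G x S) (hu : u ∈ S) :
    S = G.complComponent x u := by
  obtain ⟨hx, -, hconn, hclosed⟩ := hS
  ext v
  refine ⟨fun hv => mem_complComponent.mpr ?_, fun hv => ?_⟩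
  · have hreach := hconn.preconnected ⟨u, hu⟩ ⟨v, hv⟩
    rw [← induce_deleteIncidenceSet_of_notMem G (s := (S : Set V)) (mod_cast hx)] at hreach
    exact hreach.map (Embedding.induce _).toHom
  · obtain ⟨p⟩ := mem_complComponent.mp hv
    by_contra hvS
    obtain ⟨d, -, hd, hdS⟩ := p.exists_boundary_dart S hu hvS
    have hadj := deleteIncidenceSet_adj.mp d.adj
    exact hdS (hclosed _ hd _ hadj.1 hadj.2.2)

theorem _root_.IsComplComponent.subset_complComponent (hS : IsComplComponent G x S)
    (hG : G.Connected) (hxy : x ≠ y) (hSy : S ≠ G.complComponent x y) :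
    S ⊆ G.complComponent y x := by
  intro v hv
  refine (hG.mem_complComponent_or hxy v).resolve_left fun hvy => hSy ?_
  rw [hS.eq_complComponent hv, complComponent_eq_of_mem hvy]

theorem _root_.IsComplComponent.exists_adj (hS : IsComplComponent G x S) (hG : G.Preconnected) :
    ∃ y ∈ S, G.Adj x y := by
  obtain ⟨hx, ⟨u, hu⟩, -, hclosed⟩ := hS
  obtain ⟨p⟩ := hG u x
  obtain ⟨d, -, hd, hdS⟩ := p.exists_boundary_dart S hu hx
  have hdx : d.snd = x := by
    by_contra h
    exact hdS (hclosed _ hd _ d.adj h)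
  exact ⟨d.fst, hd, hdx ▸ d.adj.symm⟩

theorem _root_.IsComplComponent.exists_degree_le_two [DecidableRel G.Adj]
    (hS : IsComplComponent G x S) (hG : G.IsAcyclic) : ∃ a ∈ S, G.degree a ≤ 2 := by
  classical
  obtain ⟨-, -, hconn, hclosed⟩ := hS
  obtain ⟨a, ha⟩ := IsTree.exists_degree_le_one ⟨hconn, hG.induce _⟩
  refine ⟨a, a.2, ?_⟩
  have hsub : G.neighborFinset a ⊆
      insert x (((G.induce (S : Set V)).neighborFinset a).map (Function.Embedding.subtype _)) := by
    intro b hb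
    rw [mem_neighborFinset] at hb
    by_cases hbx : b = x
    · simp [hbx]
    · exact mem_insert_of_mem
        (mem_map.mpr ⟨⟨b, hclosed _ a.2 _ hb hbx⟩, by simpa using hb, rfl⟩)
  calc G.degree a = #(G.neighborFinset a) := (card_neighborFinset_eq_degree ..).symm
    _ ≤ (G.induce (S : Set V)).degree a + 1 := by
      simpa using (card_le_card hsub).trans (card_insert_le _ _)
    _ ≤ 2 := by omega

theorem _root_.IsComplComponent.sum_pos [DecidableRel G.Adj] (hS : IsComplComponent G x S)
    (hG : G.IsAcyclic) (hdeg : ∀ v, w v = 0 → 3 ≤ G.degree v) : 0 < ∑ v ∈ S, w v := by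
  obtain ⟨a, ha, hdega⟩ := hS.exists_degree_le_two hG
  have hwa : w a ≠ 0 := fun h => by have := hdeg a h; omega
  exact (Nat.pos_of_ne_zero hwa).trans_le (single_le_sum (fun _ _ => Nat.zero_le _) ha)

theorem IsTree.sum_complComponent_add_sum_complComponent (hG : G.IsTree) (hxy : G.Adj x y)
    (w : V → ℕ) :
    ∑ v ∈ G.complComponent x y, w v + ∑ v ∈ G.complComponent y x, w v = ∑ v, w v := by
  rw [← sum_union (hG.isAcyclic.disjoint_complComponent hxy)]
  congr
  exact eq_univ_of_forall fun v => mem_union.mpr (hG.connected.mem_complComponent_or hxy.ne v)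

theorem IsAcyclic.exists_adj_notMem_complComponent [DecidableRel G.Adj] (hG : G.IsAcyclic)
    (hx : 3 ≤ G.degree x) (y z : V) :
    ∃ t, G.Adj x t ∧ t ∉ G.complComponent x y ∧ t ∉ G.complComponent x z := by
  have hle_one : ∀ y, #((G.neighborFinset x).filter (· ∈ G.complComponent x y)) ≤ 1 := by
    refine fun y => card_le_one.mpr fun t ht t' ht' => ?_
    simp only [mem_filter, mem_neighborFinset] at ht ht'
    exact (hG.eq_of_adj_of_mem_complComponent ht.1 ht'.1
      (complComponent_eq_of_mem ht.2 ▸ ht'.2)).symm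
  by_contra! h
  have hsub : G.neighborFinset x ⊆ (G.neighborFinset x).filter (· ∈ G.complComponent x y) ∪
      (G.neighborFinset x).filter (· ∈ G.complComponent x z) := by
    intro t ht
    by_cases hty : t ∈ G.complComponent x y
    · simp [ht, hty]
    · simp [ht, h t (by simpa using ht) hty]
  have hcard := (card_le_card hsub).trans (card_union_le _ _)
  rw [card_neighborFinset_eq_degree] at hcard
  linarith [hle_one y, hle_one z]

theorem IsAcyclic.sum_compl_union_complComponent_pos [DecidableRel G.Adj] (hG : G.IsAcyclic)
    (hdeg : ∀ v, w v = 0 → 3 ≤ G.degree v) (hy : y ≠ x) (hz : z ≠ x) :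
    0 < ∑ v ∈ (G.complComponent x y ∪ G.complComponent x z)ᶜ, w v := by
  by_cases hwx : w x = 0
  · obtain ⟨t, hxt, hty, htz⟩ := hG.exists_adj_notMem_complComponent (hdeg x hwx) y z
    have hsub : G.complComponent x t ⊆ (G.complComponent x y ∪ G.complComponent x z)ᶜ := by
      intro v hv
      simp only [mem_compl, mem_union, not_or]
      exact ⟨Finset.disjoint_left.mp (disjoint_complComponent_of_notMem hty) hv,
        Finset.disjoint_left.mp (disjoint_complComponent_of_notMem htz) hv⟩
    exact ((isComplComponent_complComponent hxt.ne').sum_pos hG hdeg).trans_le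
      (sum_le_sum_of_subset hsub)
  · have hx : x ∈ (G.complComponent x y ∪ G.complComponent x z)ᶜ := by
      simp [notMem_complComponent hy, notMem_complComponent hz]
    exact (Nat.pos_of_ne_zero hwx).trans_le (single_le_sum (fun _ _ => Nat.zero_le _) hx)

theorem exists_isComplComponent_of_not_isCentralVertex (h : ¬IsCentralVertex G w x) :
    ∃ S, IsComplComponent G x S ∧ ∑ v, w v ≤ 2 * ∑ v ∈ S, w v := by
  simpa [IsCentralVertex] using h

def IsBalancedEdge (G : SimpleGraph V) (w : V → ℕ) (x y : V) : Prop :=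
  G.Adj x y ∧ 2 * ∑ v ∈ G.complComponent x y, w v = ∑ v, w v

theorem IsBalancedEdge.symm (hG : G.IsTree) (h : G.IsBalancedEdge w x y) :
    G.IsBalancedEdge w y x := by
  obtain ⟨hxy, hbal⟩ := h
  have hsum := hG.sum_complComponent_add_sum_complComponent hxy w
  exact ⟨hxy.symm, by omega⟩

theorem IsBalancedEdge.isSemicentralVertex (hG : G.IsTree) (h : G.IsBalancedEdge w x y) :
    IsSemicentralVertex G w x := by
  intro S hS
  by_cases hSy : S = G.complComponent x y
  · exact hSy ▸ h.2.le
  · calc 2 * ∑ v ∈ S, w v ≤ 2 * ∑ v ∈ G.complComponent y x, w v := by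
          gcongr
          exact hS.subset_complComponent hG.connected h.1.ne hSy
      _ = ∑ v, w v := (h.symm hG).2

theorem IsTree.exists_isBalancedEdge (hG : G.IsTree) (hnc : ∀ x, ¬IsCentralVertex G w x) :
    ∃ x y, G.IsBalancedEdge w x y := by
  obtain ⟨x⟩ := hG.connected.nonempty
  obtain ⟨S, hS, hheavy⟩ := exists_isComplComponent_of_not_isCentralVertex (hnc x)
  induction hn : #S using Nat.strong_induction_on generalizing x S with
  | _ n ih =>
  obtain ⟨y, hyS, hxy⟩ := hS.exists_adj hG.connected.preconnected
  have hSy := hS.eq_complComponent hyS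
  obtain ⟨T, hT, hTheavy⟩ := exists_isComplComponent_of_not_isCentralVertex (hnc y)
  by_cases hxT : x ∈ T
  · refine ⟨x, y, hxy, ?_⟩
    rw [hT.eq_complComponent hxT] at hTheavy
    rw [hSy] at hheavy
    have hsum := hG.sum_complComponent_add_sum_complComponent hxy w
    omega
  · have hTS : T ⊆ S := hSy ▸ hT.subset_complComponent hG.connected hxy.ne'
      fun h => hxT (h ▸ mem_complComponent_self)
    exact ih #T (hn ▸ card_lt_card ((ssubset_iff_of_subset hTS).mpr ⟨y, hyS, hT.1⟩))
      y T hT hTheavy rfl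

theorem IsBalancedEdge.eq_of_isSemicentralVertex [DecidableRel G.Adj] (hG : G.IsTree)
    (hdeg : ∀ v, w v = 0 → 3 ≤ G.degree v) (h : G.IsBalancedEdge w x y)
    (hz : IsSemicentralVertex G w z) (hzx : z ∈ G.complComponent y x) : z = x := by
  by_contra hzx'
  have hzy : z ∉ G.complComponent x y := fun hzy =>
    Finset.disjoint_left.mp (hG.isAcyclic.disjoint_complComponent h.1) hzy hzx
  have hR := hG.isAcyclic.sum_compl_union_complComponent_pos hdeg h.1.ne' hzx'
  -- everything outside the component of `T - x` containing `z` is joined to `x` avoiding `z`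
  have hsub : G.complComponent x y ∪ (G.complComponent x y ∪ G.complComponent x z)ᶜ ⊆
      G.complComponent z x := by
    intro v hv
    refine (hG.connected.mem_complComponent_or (Ne.symm hzx') v).resolve_left fun hvz => ?_
    rcases mem_union.mp hv with hvy | hvR
    · exact Finset.disjoint_left.mp (disjoint_complComponent_of_notMem hzy) hvz hvy
    · exact (mem_compl.mp hvR) (mem_union_right _ hvz)
  have hdisj : Disjoint (G.complComponent x y) (G.complComponent x y ∪ G.complComponent x z)ᶜ :=
    disjoint_compl_right.mono_left subset_union_left
  have hle := sum_le_sum_of_subset (f := w) hsub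
  rw [sum_union hdisj] at hle
  have hsemi := hz _ (isComplComponent_complComponent (Ne.symm hzx'))
  have hbal := h.2
  omega

end ComplComponent

end SimpleGraph

theorem tree_two_semicentral_general {V : Type} [Fintype V] [DecidableEq V]
    (G : SimpleGraph V) [DecidableRel G.Adj] (hT : G.IsTree) (w : V → ℕ)
    (hdeg : ∀ v : V, w v = 0 → 3 ≤ G.degree v)
    (hnc : ∀ x : V, ¬ IsCentralVertex G w x) :
    ∃ x y : V, x ≠ y ∧ G.Adj x y ∧
      IsSemicentralVertex G w x ∧ IsSemicentralVertex G w y ∧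
      ∀ z : V, IsSemicentralVertex G w z → z = x ∨ z = y := by
  obtain ⟨x, y, hxy⟩ := hT.exists_isBalancedEdge hnc
  refine ⟨x, y, hxy.1.ne, hxy.1, hxy.isSemicentralVertex hT, (hxy.symm hT).isSemicentralVertex hT,
    fun z hz => ?_⟩
  rcases hT.connected.mem_complComponent_or hxy.1.ne z with hzy | hzx
  · exact Or.inr ((hxy.symm hT).eq_of_isSemicentralVertex hT hdeg hz hzy)
  · exact Or.inl (hxy.eq_of_isSemicentralVertex hT hdeg hz hzx)

/-- a finite weighted tree of total weight `g ≥ 2`, in which every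
weight-0 vertex has degree `≥ 3`, and which has no central vertex, has exactly two
semicentral vertices, and they are adjacent. -/
theorem tree_two_semicentral {V : Type} [Fintype V] [DecidableEq V]
    (G : SimpleGraph V) [DecidableRel G.Adj] (hT : G.IsTree) (w : V → ℕ)
    (hg : 2 ≤ ∑ v, w v) (hdeg : ∀ v : V, w v = 0 → 3 ≤ G.degree v)
    (hnc : ∀ x : V, ¬ IsCentralVertex G w x) :
    ∃ x y : V, x ≠ y ∧ G.Adj x y ∧
      IsSemicentralVertex G w x ∧ IsSemicentralVertex G w y ∧
      ∀ z : V, IsSemicentralVertex G w z → z = x ∨ z = y :=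
  tree_two_semicentral_general G hT w hdeg hnc
end

section
/- Let T be a finite tree with weight function w: V(T) → ℕ, total weight g ≥ 2, with every weight-0 vertex of degree ≥ 3. Suppose no vertex of T is central. Then there exists an edge e of T such that both connected components of T − e have total weight exactly g/2 (in particular g is even). -/
open Finset

/-!
Orient every edge of the tree towards its side of weight `> g/2`, if it has one. Choosing an
outgoing edge at every vertex would inject the `n` vertices into the `n - 1` edges, so some
vertex `x` has no outgoing edge: for every edge at `x`, the side away from `x` weighs `≤ g/2`.
Each component of `T − x` lies in such a side, and since `x` is not central one of them
weighs `≥ g/2`; the side containing it then weighs exactly `g/2`.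
-/
namespace SimpleGraph

variable {V : Type} [Fintype V] {G : SimpleGraph V}

theorem IsTree.exists_forall_adj_not_of_asymm (hT : G.IsTree) {R : V → V → Prop}
    (hR : ∀ x y, G.Adj x y → R x y → ¬ R y x) : ∃ x, ∀ y, G.Adj x y → ¬ R x y := by
  classical
  by_contra! h
  choose f hadj hRf using h
  have hinj : Set.InjOn (fun x => s(x, f x)) (univ : Finset V) := by
    intro a _ b _ hab
    rcases Sym2.eq_iff.mp hab with ⟨rfl, -⟩ | ⟨rfl, hb⟩
    · rfl
    · -- `a = f b` and `b = f a`: the edge `ab` would be oriented both ways.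
      have hback := hRf (f b)
      rw [hb] at hback
      exact absurd hback (hR _ _ (hadj b) (hRf b))
  have hcard := card_le_card_of_injOn _ (fun x _ => mem_edgeFinset.mpr (hadj x)) hinj
  have htree := hT.card_edgeFinset
  rw [card_univ] at hcard
  omega

noncomputable def edgeSide (G : SimpleGraph V) (x y : V) : Finset V :=
  open Classical in univ.filter fun v => (G.deleteEdges {s(x, y)}).Reachable y v

theorem mem_edgeSide {x y v : V} :
    v ∈ G.edgeSide x y ↔ (G.deleteEdges {s(x, y)}).Reachable y v := by
  simp [edgeSide]

theorem self_mem_edgeSide {x y : V} : y ∈ G.edgeSide x y :=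
  mem_edgeSide.mpr (Reachable.refl y)

theorem mem_edgeSide_iff_of_adj {x y u v : V} (huv : G.Adj u v) (hne : s(u, v) ≠ s(x, y)) :
    u ∈ G.edgeSide x y ↔ v ∈ G.edgeSide x y := by
  have hdel : (G.deleteEdges {s(x, y)}).Adj u v := deleteEdges_adj.mpr ⟨huv, hne⟩
  simp only [mem_edgeSide]
  exact ⟨fun h => h.trans hdel.reachable, fun h => h.trans hdel.reachable.symm⟩

theorem IsTree.edgeSide_swap [DecidableEq V] (hT : G.IsTree) {x y : V} (hxy : G.Adj x y) :
    G.edgeSide y x = (G.edgeSide x y)ᶜ := by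
  have hbridge : ¬ (G.deleteEdges {s(x, y)}).Reachable x y :=
    isBridge_iff.mp (isAcyclic_iff_forall_adj_isBridge.mp hT.isAcyclic hxy)
  ext v
  rw [mem_compl, mem_edgeSide, mem_edgeSide, Sym2.eq_swap]
  refine ⟨fun hxv hyv => hbridge (hxv.trans hyv.symm), fun hyv => ?_⟩
  -- The vertices reaching `x` or `y` in `G − xy` are closed under adjacency in `G`.
  by_contra hxv
  obtain ⟨p⟩ := hT.connected.preconnected x v
  obtain ⟨d, -, hd, hd'⟩ := p.exists_boundary_dart
    {u | (G.deleteEdges {s(x, y)}).Reachable x u ∨ (G.deleteEdges {s(x, y)}).Reachable y u}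
    (Or.inl .rfl) (by simp [hxv, hyv])
  apply hd'
  by_cases he : s(d.fst, d.snd) = s(x, y)
  · rcases Sym2.eq_iff.mp he with ⟨-, rfl⟩ | ⟨-, rfl⟩
    exacts [Or.inr .rfl, Or.inl .rfl]
  · have hstep := (deleteEdges_adj.mpr ⟨d.adj, he⟩ : (G.deleteEdges {s(x, y)}).Adj _ _).reachable
    exact hd.imp (·.trans hstep) (·.trans hstep)

theorem IsTree.notMem_edgeSide (hT : G.IsTree) {x y : V} (hxy : G.Adj x y) :
    x ∉ G.edgeSide x y := by
  classical
  simpa [hT.edgeSide_swap hxy] using (self_mem_edgeSide : x ∈ G.edgeSide y x)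

theorem IsTree.exists_forall_two_mul_sum_edgeSide_le (hT : G.IsTree) (w : V → ℕ) :
    ∃ x, ∀ y, G.Adj x y → 2 * ∑ v ∈ G.edgeSide x y, w v ≤ ∑ v, w v := by
  classical
  simp only [← not_lt]
  refine hT.exists_forall_adj_not_of_asymm fun x y hxy hheavy hheavy' => ?_
  rw [hT.edgeSide_swap hxy] at hheavy'
  have hsplit := sum_add_sum_compl (G.edgeSide x y) w
  omega

end SimpleGraph

open SimpleGraph

namespace IsComplComponent

variable {V : Type} [Fintype V] [DecidableEq V] {G : SimpleGraph V} {x : V} {S : Finset V}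

theorem exists_adj_s17 (hS : IsComplComponent G x S) (hG : G.Connected) : ∃ y ∈ S, G.Adj x y := by
  obtain ⟨hxS, ⟨s, hs⟩, -, hclosed⟩ := hS
  obtain ⟨p⟩ := hG.preconnected s x
  obtain ⟨d, -, hd, hd'⟩ := p.exists_boundary_dart (S : Set V) hs hxS
  by_cases hdx : d.snd = x
  · exact ⟨d.fst, hd, hdx ▸ d.adj.symm⟩
  · exact absurd (hclosed _ hd _ d.adj hdx) hd'

theorem subset_edgeSide (hS : IsComplComponent G x S) {y : V} (hyS : y ∈ S) :
    S ⊆ G.edgeSide x y := by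
  obtain ⟨hxS, -, hconn, -⟩ := hS
  have hxS' : x ∉ (S : Set V) := by exact_mod_cast hxS
  let f : G.induce (S : Set V) →g G.deleteEdges {s(x, y)} :=
    ⟨Subtype.val, fun {a b} hab => deleteEdges_adj.mpr ⟨hab, fun he => by
      rcases Sym2.eq_iff.mp he with ⟨ha, -⟩ | ⟨-, hb⟩
      exacts [hxS' (ha ▸ a.2), hxS' (hb ▸ b.2)]⟩⟩
  intro u hu
  exact mem_edgeSide.mpr ((hconn.preconnected ⟨y, hyS⟩ ⟨u, hu⟩).map f)

end IsComplComponent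

theorem tree_half_weight_edge_general {V : Type} [Fintype V] [DecidableEq V]
    (G : SimpleGraph V) (hT : G.IsTree) (w : V → ℕ)
    (hnc : ∀ x : V, ¬ IsCentralVertex G w x) :
    (∃ x y : V, G.Adj x y ∧ ∃ S : Finset V, x ∈ S ∧ y ∉ S ∧
        (∀ u v : V, G.Adj u v → s(u, v) ≠ s(x, y) → (u ∈ S ↔ v ∈ S)) ∧
        2 * ∑ v ∈ S, w v = ∑ v, w v ∧ 2 * ∑ v ∈ Sᶜ, w v = ∑ v, w v) ∧
      Even (∑ v, w v) := by
  obtain ⟨x, hlight⟩ := hT.exists_forall_two_mul_sum_edgeSide_le w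
  obtain ⟨S, hS, hheavy⟩ : ∃ S, IsComplComponent G x S ∧ ∑ v, w v ≤ 2 * ∑ v ∈ S, w v := by
    simpa [IsCentralVertex] using hnc x
  obtain ⟨y, hyS, hxy⟩ := hS.exists_adj_s17 hT.connected
  have hhalf : 2 * ∑ v ∈ G.edgeSide x y, w v = ∑ v, w v :=
    (hlight y hxy).antisymm <| hheavy.trans <|
      Nat.mul_le_mul_left 2 (sum_le_sum_of_subset (hS.subset_edgeSide hyS))
  have hsplit := sum_add_sum_compl (G.edgeSide x y) w
  refine ⟨⟨y, x, hxy.symm, G.edgeSide x y, self_mem_edgeSide, hT.notMem_edgeSide hxy,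
    fun u v huv hne => mem_edgeSide_iff_of_adj huv (by rwa [Sym2.eq_swap (a := y)] at hne),
    hhalf, by omega⟩,
    ⟨_, hhalf.symm.trans (two_mul _)⟩⟩

/-- a finite weighted tree of total weight `g ≥ 2`, in which every
weight-0 vertex has degree `≥ 3`, and which has no central vertex, has an edge `e`
such that both connected components of `T − e` have total weight exactly `g/2`
(in particular `g` is even). Here `S` is the vertex set of the component of one
endpoint of the deleted edge: it is closed under adjacency except along `e`. -/
theorem tree_half_weight_edge {V : Type} [Fintype V] [DecidableEq V]
    (G : SimpleGraph V) [DecidableRel G.Adj] (hT : G.IsTree) (w : V → ℕ)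
    (hg : 2 ≤ ∑ v, w v) (hdeg : ∀ v : V, w v = 0 → 3 ≤ G.degree v)
    (hnc : ∀ x : V, ¬ IsCentralVertex G w x) :
    (∃ x y : V, G.Adj x y ∧ ∃ S : Finset V, x ∈ S ∧ y ∉ S ∧
        (∀ u v : V, G.Adj u v → s(u, v) ≠ s(x, y) → (u ∈ S ↔ v ∈ S)) ∧
        2 * ∑ v ∈ S, w v = ∑ v, w v ∧ 2 * ∑ v ∈ Sᶜ, w v = ∑ v, w v) ∧
      Even (∑ v, w v) :=
  tree_half_weight_edge_general G hT w hnc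
end
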